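/- Let ω ∈ 𝓑'₀ have power series expansion ω(z) = c₁z + c₂z² + c₃z³ + ⋯ on 𝔻. Then |c₃ − c₁c₂| ≤ 1/3. -/

import Mathlib

/-!
Put `g = ω'`, a holomorphic map of the disk into the closed disk with `g(0) = c₁`,
`g'(0) = 2c₂`, `g''(0) = 6c₃`; the claim is `|g''(0) - 3 g(0) g'(0)| ≤ 2`. If `|g(0)| = 1`, then
`g` is constant by the maximum principle. Otherwise, with `a = g(0)`, the Schur transform
`ψ(z) = (g(z) - a) / (z (1 - ā g(z)))` maps the disk into the closed disk (Schwarz lemma), and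
differentiating `g(z) = a + z ψ(z) (1 - ā g(z))` twice at `0` gives
`g''(0) - 3 a g'(0) = (1 - |a|²) (2 ψ'(0) - 2 ā ψ(0)² - 3 a ψ(0))`.
Schwarz–Pick for `ψ`, `|ψ'(0)| ≤ 1 - |ψ(0)|²`, bounds this by
`(1 - t²) (2 (1 - w²) + 2 t w² + 3 t w)` with `t = |a|`, `w = |ψ(0)|`, which is at most `2`.
-/

open Complex ComplexConjugate Metric Filter Topology Set Nat

section Derivatives

variable {𝕜 : Type*} [NontriviallyNormedField 𝕜] [CompleteSpace 𝕜]

theorem iteratedDeriv_eq_factorial_mul_of_hasSum [CharZero 𝕜] {f : 𝕜 → 𝕜} {a : ℕ → 𝕜}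
    (hf : ∀ᶠ z in 𝓝 0, HasSum (fun n => a n * z ^ n) (f z)) (n : ℕ) :
    iteratedDeriv n f 0 = n ! * a n := by
  have hp : HasFPowerSeriesAt f (FormalMultilinearSeries.ofScalars 𝕜 a) 0 := by
    refine hasFPowerSeriesAt_iff.2 ?_
    simpa [FormalMultilinearSeries.coeff_ofScalars, mul_comm] using hf
  have hcoeff := FormalMultilinearSeries.ofScalars_series_injective (E := 𝕜) 𝕜
    (hp.analyticAt.hasFPowerSeriesAt.eq_formalMultilinearSeries hp)
  rw [← congrFun hcoeff n, mul_div_cancel₀ _ (Nat.cast_ne_zero.2 n.factorial_ne_zero)]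

variable {f h : 𝕜 → 𝕜}

theorem deriv_eventuallyEq_of_eventually_eq_add_mul (hh : AnalyticAt 𝕜 h 0)
    (hf : ∀ᶠ z in 𝓝 0, f z = f 0 + z * h z) :
    deriv f =ᶠ[𝓝 0] fun z => h z + z * deriv h z := by
  filter_upwards [hf.eventually_nhds, hh.eventually_analyticAt] with z hfz hhz
  rw [EventuallyEq.deriv_eq (f := fun w => f 0 + w * h w) hfz]
  simpa using (((hasDerivAt_id z).mul hhz.differentiableAt.hasDerivAt).const_add (f 0)).deriv

theorem deriv_zero_of_eventually_eq_add_mul (hh : AnalyticAt 𝕜 h 0)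
    (hf : ∀ᶠ z in 𝓝 0, f z = f 0 + z * h z) : deriv f 0 = h 0 := by
  simpa using (deriv_eventuallyEq_of_eventually_eq_add_mul hh hf).eq_of_nhds

theorem deriv_deriv_zero_of_eventually_eq_add_mul (hh : AnalyticAt 𝕜 h 0)
    (hf : ∀ᶠ z in 𝓝 0, f z = f 0 + z * h z) : deriv (deriv f) 0 = 2 * deriv h 0 := by
  rw [(deriv_eventuallyEq_of_eventually_eq_add_mul hh hf).deriv_eq]
  have hsum : HasDerivAt (fun z => h z + z * deriv h z)
      (deriv h 0 + (1 * deriv h 0 + 0 * deriv (deriv h) 0)) 0 :=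
    hh.differentiableAt.hasDerivAt.add ((hasDerivAt_id 0).mul hh.deriv.differentiableAt.hasDerivAt)
  rw [hsum.deriv]
  ring

end Derivatives

section Mobius

theorem normSq_one_sub_conj_mul_sub_normSq_sub (a w : ℂ) :
    normSq (1 - conj a * w) - normSq (w - a) = (1 - normSq a) * (1 - normSq w) := by
  simp only [normSq_apply, sub_re, sub_im, mul_re, mul_im, one_re, one_im, conj_re, conj_im]
  ring

theorem norm_sub_le_norm_one_sub_conj_mul {a w : ℂ} (ha : ‖a‖ ≤ 1) (hw : ‖w‖ ≤ 1) :
    ‖w - a‖ ≤ ‖1 - conj a * w‖ := by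
  have hdiff := normSq_one_sub_conj_mul_sub_normSq_sub a w
  simp only [normSq_eq_norm_sq] at hdiff
  rw [← sq_le_sq₀ (norm_nonneg _) (norm_nonneg _)]
  nlinarith [mul_nonneg (sub_nonneg.2 (pow_le_one₀ (n := 2) (norm_nonneg a) ha))
    (sub_nonneg.2 (pow_le_one₀ (n := 2) (norm_nonneg w) hw))]

theorem one_sub_conj_mul_ne_zero {a w : ℂ} (ha : ‖a‖ < 1) (hw : ‖w‖ ≤ 1) :
    1 - conj a * w ≠ 0 := by
  refine sub_ne_zero.2 fun h => ?_
  have : ‖conj a * w‖ < 1 := by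
    rw [norm_mul, norm_conj]
    nlinarith [norm_nonneg a, norm_nonneg w]
  simp [← h] at this

theorem norm_one_sub_conj_mul_self {a : ℂ} (ha : ‖a‖ ≤ 1) :
    ‖1 - conj a * a‖ = 1 - ‖a‖ ^ 2 := by
  rw [conj_mul', ← ofReal_pow, ← ofReal_one, ← ofReal_sub, norm_real, Real.norm_of_nonneg]
  nlinarith [norm_nonneg a]

end Mobius

section Schur

noncomputable def moebiusSub (a w : ℂ) : ℂ := (w - a) / (1 - conj a * w)

theorem moebiusSub_self (a : ℂ) : moebiusSub a a = 0 := by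
  simp [moebiusSub]

theorem norm_moebiusSub_le_one {a w : ℂ} (ha : ‖a‖ < 1) (hw : ‖w‖ ≤ 1) :
    ‖moebiusSub a w‖ ≤ 1 := by
  rw [moebiusSub, norm_div, div_le_one (norm_pos_iff.2 (one_sub_conj_mul_ne_zero ha hw))]
  exact norm_sub_le_norm_one_sub_conj_mul ha.le hw

noncomputable def schurTransform (g : ℂ → ℂ) : ℂ → ℂ :=
  dslope (fun z => moebiusSub (g 0) (g z)) 0

variable {g : ℂ → ℂ} (hg1 : MapsTo g (ball 0 1) (closedBall 0 1)) (hg0 : ‖g 0‖ < 1)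
include hg1 hg0

theorem eventually_eq_add_mul_schurTransform : ∀ᶠ z in 𝓝 0,
    g z = g 0 + z * (schurTransform g z * (1 - conj (g 0) * g z)) := by
  filter_upwards [ball_mem_nhds 0 one_pos] with z hz
  have hslope := sub_smul_dslope (fun z => moebiusSub (g 0) (g z)) 0 z
  rw [moebiusSub_self, sub_zero, sub_zero, smul_eq_mul, moebiusSub] at hslope
  rw [schurTransform, ← mul_assoc, hslope,
    div_mul_cancel₀ _ (one_sub_conj_mul_ne_zero hg0 (mem_closedBall_zero_iff.1 (hg1 hz)))]
  ring

variable (hg : DifferentiableOn ℂ g (ball 0 1))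
include hg

theorem differentiableOn_moebiusSub_comp :
    DifferentiableOn ℂ (fun z => moebiusSub (g 0) (g z)) (ball 0 1) :=
  (hg.sub_const _).div ((differentiableOn_const _).sub ((differentiableOn_const _).mul hg))
    fun _ hz => one_sub_conj_mul_ne_zero hg0 (mem_closedBall_zero_iff.1 (hg1 hz))

theorem differentiableOn_schurTransform : DifferentiableOn ℂ (schurTransform g) (ball 0 1) :=
  (differentiableOn_dslope (ball_mem_nhds 0 one_pos)).2
    (differentiableOn_moebiusSub_comp hg1 hg0 hg)

theorem mapsTo_schurTransform : MapsTo (schurTransform g) (ball 0 1) (closedBall 0 1) := by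
  intro z hz
  have hmaps : MapsTo (fun z => moebiusSub (g 0) (g z)) (ball 0 1)
      (closedBall (moebiusSub (g 0) (g 0)) 1) := by
    intro w hw
    rw [moebiusSub_self, mem_closedBall_zero_iff]
    exact norm_moebiusSub_le_one hg0 (mem_closedBall_zero_iff.1 (hg1 hw))
  simpa [schurTransform] using
    norm_dslope_le_div_of_mapsTo_ball (differentiableOn_moebiusSub_comp hg1 hg0 hg) hmaps hz

theorem analyticAt_schurTransform_mul :
    AnalyticAt ℂ (fun z => schurTransform g z * (1 - conj (g 0) * g z)) 0 :=
  ((differentiableOn_schurTransform hg1 hg0 hg).mul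
    ((differentiableOn_const _).sub ((differentiableOn_const _).mul hg))).analyticAt
    (ball_mem_nhds 0 one_pos)

theorem deriv_zero_eq_schurTransform :
    deriv g 0 = schurTransform g 0 * (1 - conj (g 0) * g 0) :=
  deriv_zero_of_eventually_eq_add_mul (analyticAt_schurTransform_mul hg1 hg0 hg)
    (eventually_eq_add_mul_schurTransform hg1 hg0)

theorem deriv_deriv_zero_eq_schurTransform :
    deriv (deriv g) 0 = 2 * (deriv (schurTransform g) 0 * (1 - conj (g 0) * g 0)
      - schurTransform g 0 * (conj (g 0) * deriv g 0)) := by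
  rw [deriv_deriv_zero_of_eventually_eq_add_mul (analyticAt_schurTransform_mul hg1 hg0 hg)
    (eventually_eq_add_mul_schurTransform hg1 hg0)]
  have hg' := (hg.differentiableAt (ball_mem_nhds 0 one_pos)).hasDerivAt
  have hψ' := ((differentiableOn_schurTransform hg1 hg0 hg).differentiableAt
    (ball_mem_nhds 0 one_pos)).hasDerivAt
  rw [(hψ'.fun_mul ((hg'.const_mul (conj (g 0))).const_sub 1)).deriv]
  ring

end Schur

theorem one_sub_sq_mul_le_two {t w : ℝ} (ht0 : 0 ≤ t) (ht1 : t ≤ 1) (hw1 : w ≤ 1) :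
    (1 - t ^ 2) * (2 * (1 - w ^ 2) + 2 * t * w ^ 2 + 3 * t * w) ≤ 2 := by
  -- for small `t` complete the square in `w`; for large `t` the maximum over `w ≤ 1` is at `w = 1`
  rcases le_or_gt t (7 / 9) with h | h
  · nlinarith [mul_nonneg (by nlinarith : (0:ℝ) ≤ 1 - t ^ 2) (sq_nonneg (4 * (1 - t) * w - 3 * t)),
      mul_nonneg (mul_nonneg (sq_nonneg t) (by linarith : (0:ℝ) ≤ 1 - t))
        (by linarith : (0:ℝ) ≤ 7 - 9 * t),
      sq_nonneg t]
  · nlinarith [mul_nonneg (mul_nonneg (by nlinarith : (0:ℝ) ≤ 1 - t ^ 2)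
        (by linarith : (0:ℝ) ≤ 1 - t)) (sq_nonneg w),
      mul_nonneg (mul_nonneg (by nlinarith : (0:ℝ) ≤ 1 - t ^ 2) ht0) (by linarith : (0:ℝ) ≤ 1 - w),
      mul_nonneg ht0 (by nlinarith : (0:ℝ) ≤ 3 * t ^ 2 + 2 * t - 3)]

section SelfMap

variable {g : ℂ → ℂ} (hg1 : MapsTo g (ball 0 1) (closedBall 0 1))
  (hg : DifferentiableOn ℂ g (ball 0 1))
include hg1 hg

theorem eventuallyEq_const_of_norm_eq_one (h : ‖g 0‖ = 1) : g =ᶠ[𝓝 0] fun _ => g 0 := by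
  refine eventually_eq_of_isLocalMax_norm
    (hg.eventually_differentiableAt (ball_mem_nhds 0 one_pos)) ?_
  filter_upwards [ball_mem_nhds 0 one_pos] with z hz
  simpa [h] using hg1 hz

theorem norm_deriv_le_one_sub_sq : ‖deriv g 0‖ ≤ 1 - ‖g 0‖ ^ 2 := by
  rcases (mem_closedBall_zero_iff.1 (hg1 (mem_ball_self one_pos))).lt_or_eq with hg0 | hg0
  · rw [deriv_zero_eq_schurTransform hg1 hg0 hg, norm_mul, norm_one_sub_conj_mul_self hg0.le]
    have hψ0 := mem_closedBall_zero_iff.1 (mapsTo_schurTransform hg1 hg0 hg (mem_ball_self one_pos))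
    have : 0 ≤ 1 - ‖g 0‖ ^ 2 := by nlinarith [norm_nonneg (g 0)]
    nlinarith
  · simp [(eventuallyEq_const_of_norm_eq_one hg1 hg hg0).deriv_eq, hg0]

theorem norm_deriv_deriv_sub_le_two : ‖deriv (deriv g) 0 - 3 * g 0 * deriv g 0‖ ≤ 2 := by
  rcases (mem_closedBall_zero_iff.1 (hg1 (mem_ball_self one_pos))).lt_or_eq with hg0 | hg0
  swap
  · have hconst := eventuallyEq_const_of_norm_eq_one hg1 hg hg0
    simp [hconst.deriv_eq, hconst.deriv.deriv_eq]
  set ψ := schurTransform g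
  set k := conj (g 0)
  have hψ1 := mapsTo_schurTransform hg1 hg0 hg
  have hψ := differentiableOn_schurTransform hg1 hg0 hg
  have hψ0 : ‖ψ 0‖ ≤ 1 := mem_closedBall_zero_iff.1 (hψ1 (mem_ball_self one_pos))
  have hfactor : deriv (deriv g) 0 - 3 * g 0 * deriv g 0
      = (1 - k * g 0) * (2 * deriv ψ 0 - 2 * k * ψ 0 ^ 2 - 3 * g 0 * ψ 0) := by
    rw [deriv_deriv_zero_eq_schurTransform hg1 hg0 hg, deriv_zero_eq_schurTransform hg1 hg0 hg]
    ring
  have htriangle : ‖2 * deriv ψ 0 - 2 * k * ψ 0 ^ 2 - 3 * g 0 * ψ 0‖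
      ≤ 2 * (1 - ‖ψ 0‖ ^ 2) + 2 * ‖g 0‖ * ‖ψ 0‖ ^ 2 + 3 * ‖g 0‖ * ‖ψ 0‖ := by
    have := norm_deriv_le_one_sub_sq hψ1 hψ
    refine (norm_sub_le _ _).trans ((add_le_add_left (norm_sub_le _ _) _).trans ?_)
    simp only [norm_mul, norm_pow, norm_conj, k, RCLike.norm_ofNat]
    linarith
  calc ‖deriv (deriv g) 0 - 3 * g 0 * deriv g 0‖
      = (1 - ‖g 0‖ ^ 2) * ‖2 * deriv ψ 0 - 2 * k * ψ 0 ^ 2 - 3 * g 0 * ψ 0‖ := by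
        rw [hfactor, norm_mul, norm_one_sub_conj_mul_self hg0.le]
    _ ≤ (1 - ‖g 0‖ ^ 2) * (2 * (1 - ‖ψ 0‖ ^ 2) + 2 * ‖g 0‖ * ‖ψ 0‖ ^ 2 + 3 * ‖g 0‖ * ‖ψ 0‖) :=
        mul_le_mul_of_nonneg_left htriangle (by nlinarith [norm_nonneg (g 0)])
    _ ≤ 2 := one_sub_sq_mul_le_two (norm_nonneg _) hg0.le hψ0

end SelfMap

theorem stmt_8_general (ω : ℂ → ℂ) (c : ℕ → ℂ)
    (hd : DifferentiableOn ℂ ω (ball 0 1))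
    (hb : ∀ z ∈ ball (0:ℂ) 1, ‖deriv ω z‖ ≤ 1)
    (hc : ∀ z ∈ ball (0:ℂ) 1, HasSum (fun n : ℕ => c (n + 1) * z ^ (n + 1)) (ω z)) :
    ‖c 3 - c 1 * c 2‖ ≤ 1/3 := by
  have hcoeff : ∀ n, iteratedDeriv n ω 0 = n ! * Function.update c 0 0 n := by
    refine iteratedDeriv_eq_factorial_mul_of_hasSum ?_
    filter_upwards [ball_mem_nhds 0 one_pos] with z hz
    exact (hasSum_nat_add_iff' 1).1 (by simpa using hc z hz)
  have hbound := norm_deriv_deriv_sub_le_two (fun z hz => mem_closedBall_zero_iff.2 (hb z hz))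
    (hd.deriv isOpen_ball)
  have h1 : deriv ω 0 = c 1 := by simpa using hcoeff 1
  have h2 : deriv (deriv ω) 0 = 2 * c 2 := by
    simpa [iteratedDeriv_succ, Nat.factorial] using hcoeff 2
  have h3 : deriv (deriv (deriv ω)) 0 = 6 * c 3 := by
    simpa [iteratedDeriv_succ, Nat.factorial] using hcoeff 3
  rw [h1, h2, h3, show 6 * c 3 - 3 * c 1 * (2 * c 2) = 6 * (c 3 - c 1 * c 2) by ring, norm_mul,
    RCLike.norm_ofNat] at hbound
  linarith

theorem stmt_8 (ω : ℂ → ℂ) (c : ℕ → ℂ)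
    (hd : DifferentiableOn ℂ ω (ball 0 1))
    (h0 : ω 0 = 0)
    (hb : ∀ z ∈ ball (0:ℂ) 1, ‖deriv ω z‖ ≤ 1)
    (hc : ∀ z ∈ ball (0:ℂ) 1, HasSum (fun n : ℕ => c (n + 1) * z ^ (n + 1)) (ω z)) :
    ‖c 3 - c 1 * c 2‖ ≤ 1/3 :=
  stmt_8_general ω c hd hb hc
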